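/- arXiv:2210.04179 — 2 statements merged into one kernel-verified Lean document; each statement's English description precedes it below -/
import Mathlib

section
/- If the multi-version serialization graph G(s) of a schedule s with version order ≪ is acyclic, then (s, ≪) is multi-version view serializable: there exists a serial (mono-version) schedule over the same transactions in which every transaction reads the same versions (has the same reads-from relation) as in (s, ≪). -/
/-!
Edges of `G(s)` must point forward in any serial order, so take the serial order to be a
linear extension of the transitive closure of `G(s)`, a strict order because `G(s)` is acyclic.
If `T_i` reads `x` from `T_j`, the reads-from edge puts `T_j` before `T_i`, and any other writer
`T_k` of `x` is comparable with `T_j` in the version order: if `x_j ≪ x_k` the edge `T_i → T_k`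
puts `T_k` after `T_i`, and if `x_k ≪ x_j` the edge `T_k → T_j` puts `T_k` before `T_j`.
-/

def Acyclic {V : Type*} (E : V → V → Prop) : Prop :=
  ∀ v, ¬ Relation.TransGen E v v

section Ranking

variable {V : Type*} {E : V → V → Prop}

lemma Acyclic.isStrictOrder_transGen (h : Acyclic E) : IsStrictOrder V (Relation.TransGen E) where
  irrefl := h
  trans _ _ _ := Relation.TransGen.trans

lemma Acyclic.exists_injective_rank [Finite V] (h : Acyclic E) :
    ∃ rank : V → ℕ, Function.Injective rank ∧ ∀ a b, E a b → rank a < rank b := by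
  have := h.isStrictOrder_transGen
  let _ : PartialOrder V := partialOrderOfSO (Relation.TransGen E)
  have : Finite (LinearExtension V) := ‹Finite V›
  let _ := Fintype.ofFinite (LinearExtension V)
  let toFin := (Fintype.orderIsoFinOfCardEq (LinearExtension V) rfl).symm
  have hmono : StrictMono (fun v => (toFin (toLinearExtension v) : ℕ)) :=
    Fin.val_strictMono.comp <| toFin.strictMono.comp <|
      toLinearExtension.monotone.strictMono_of_injective fun _ _ => id
  exact ⟨_, Fin.val_injective.comp <| toFin.injective.comp fun _ _ => id,
    fun _ _ hab => hmono (Relation.TransGen.single hab)⟩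

end Ranking

theorem mvsg_acyclic_implies_mv_view_serializable_general
    {Txn Item : Type*} [Fintype Txn]
    (writes : Txn → Item → Prop)            -- T writes a version of item x
    (rf : Txn → Item → Txn → Prop)          -- rf i x j : T_i reads version x_j of x written by T_j
    (vo : Item → Txn → Txn → Prop)          -- vo x j k : version order x_j ≪ x_k
    (hrf_writes : ∀ i x j, rf i x j → writes j x)
    (hvo_total : ∀ x a b, writes a x → writes b x → a ≠ b → vo x a b ∨ vo x b a)
    -- the multi-version serialization graph G(s)
    (G : Txn → Txn → Prop)
    (hG : ∀ a b, G a b ↔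
      (∃ x, rf b x a) ∨                                           -- reads-from edge j → i
      (∃ x j, rf a x j ∧ writes b x ∧ b ≠ j ∧ b ≠ a ∧ vo x j b) ∨ -- edge i → k when x_j ≪ x_k
      (∃ x i, rf i x b ∧ writes a x ∧ a ≠ b ∧ a ≠ i ∧ vo x a b))  -- edge k → j when x_k ≪ x_j
    (hacyclic : Acyclic G) :
    ∃ ord : Txn → ℕ, Function.Injective ord ∧
      ∀ i x j, rf i x j →
        ord j < ord i ∧
        ∀ k, writes k x → k ≠ j → ¬ (ord j < ord k ∧ ord k < ord i) := by
  obtain ⟨ord, hinj, hedge⟩ := hacyclic.exists_injective_rank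
  refine ⟨ord, hinj, fun i x j hij => ⟨hedge j i ((hG j i).2 (.inl ⟨x, hij⟩)), ?_⟩⟩
  rintro k hk hkj ⟨hjk, hki⟩
  obtain rfl | hki_ne := eq_or_ne k i
  · exact hki.false
  rcases hvo_total x j k (hrf_writes i x j hij) hk hkj.symm with hvo | hvo
  · have hi_lt_k := hedge i k ((hG i k).2 (.inr (.inl ⟨x, j, hij, hk, hkj, hki_ne, hvo⟩)))
    exact hi_lt_k.not_gt hki
  · have hk_lt_j := hedge k j ((hG k j).2 (.inr (.inr ⟨x, i, hij, hk, hkj, hki_ne, hvo⟩)))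
    exact hk_lt_j.not_gt hjk

/-- If the multi-version serialization graph `G(s)` of a schedule `s`
with version order `≪` is acyclic, then `(s, ≪)` is multi-version view serializable:
there is a serial (mono-version) schedule — given by an injective ranking `ord` of the
transactions — in which every transaction reads from the same writer as in `(s, ≪)`,
i.e. whenever `T_i` reads `x` from `T_j`, `T_j` precedes `T_i` and no other writer of
`x` lies strictly between them. -/
theorem mvsg_acyclic_implies_mv_view_serializable
    {Txn Item : Type*} [Fintype Txn]
    (writes : Txn → Item → Prop)            -- T writes a version of item x
    (rf : Txn → Item → Txn → Prop)          -- rf i x j : T_i reads version x_j of x written by T_j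
    (vo : Item → Txn → Txn → Prop)          -- vo x j k : version order x_j ≪ x_k
    (hrf_writes : ∀ i x j, rf i x j → writes j x)
    (hrf_ne : ∀ i x j, rf i x j → i ≠ j)
    (hvo_total : ∀ x a b, writes a x → writes b x → a ≠ b → vo x a b ∨ vo x b a)
    (hvo_asymm : ∀ x a b, vo x a b → ¬ vo x b a)
    -- the multi-version serialization graph G(s)
    (G : Txn → Txn → Prop)
    (hG : ∀ a b, G a b ↔
      (∃ x, rf b x a) ∨                                           -- reads-from edge j → i
      (∃ x j, rf a x j ∧ writes b x ∧ b ≠ j ∧ b ≠ a ∧ vo x j b) ∨ -- edge i → k when x_j ≪ x_k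
      (∃ x i, rf i x b ∧ writes a x ∧ a ≠ b ∧ a ≠ i ∧ vo x a b))  -- edge k → j when x_k ≪ x_j
    (hacyclic : Acyclic G) :
    ∃ ord : Txn → ℕ, Function.Injective ord ∧
      ∀ i x j, rf i x j →
        ord j < ord i ∧
        ∀ k, writes k x → k ≠ j → ¬ (ord j < ord k ∧ ord k < ord i) :=
  mvsg_acyclic_implies_mv_view_serializable_general writes rf vo hrf_writes hvo_total G hG hacyclic
end

section
/- Suppose for each data item x the set of versions of x is linearly ordered by a version order ≪_x, and the serialization graph contains, for each reads-from pair (T_j writes x_j, T_i reads x_j) and each other writer T_k of x, the edge T_i → T_k when x_j ≪_x x_k and the edge T_k → T_j when x_k ≪_x x_j, plus the edge T_j → T_i. If the graph is acyclic with topological order <, then for every item x and reads-from pair as above, there is no writer T_k of x with T_j < T_k < T_i. -/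
theorem edge_to_or_from_other_writer {Txn Item : Type*}
    {writes : Txn → Item → Prop} {rf : Txn → Item → Txn → Prop}
    {vo : Item → Txn → Txn → Prop} {G : Txn → Txn → Prop}
    (hrf_writes : ∀ i x j, rf i x j → writes j x)
    (hvo_total : ∀ x a b, writes a x → writes b x → a ≠ b → vo x a b ∨ vo x b a)
    (hpost_edge : ∀ i x j k, rf i x j → writes k x → k ≠ j → k ≠ i → vo x j k → G i k)
    (hpre_edge : ∀ i x j k, rf i x j → writes k x → k ≠ j → k ≠ i → vo x k j → G k j)
    {i j k : Txn} {x : Item} (hrf : rf i x j) (hwk : writes k x) (hkj : k ≠ j) (hki : k ≠ i) :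
    G i k ∨ G k j :=
  (hvo_total x j k (hrf_writes i x j hrf) hwk hkj.symm).imp
    (hpost_edge i x j k hrf hwk hkj hki) (hpre_edge i x j k hrf hwk hkj hki)

theorem version_order_edges_forbid_intermediate_writer_general
    {Txn Item : Type*}
    (writes : Txn → Item → Prop)
    (rf : Txn → Item → Txn → Prop)
    (vo : Item → Txn → Txn → Prop)
    (G : Txn → Txn → Prop)
    (hrf_writes : ∀ i x j, rf i x j → writes j x)
    (hvo_total : ∀ x a b, writes a x → writes b x → a ≠ b → vo x a b ∨ vo x b a)
    (hpost_edge : ∀ i x j k, rf i x j → writes k x → k ≠ j → k ≠ i → vo x j k → G i k)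
    (hpre_edge : ∀ i x j k, rf i x j → writes k x → k ≠ j → k ≠ i → vo x k j → G k j)
    (ord : Txn → ℕ)
    (hord_topo : ∀ u v, G u v → ord u < ord v) :
    ∀ i x j, rf i x j →
      ∀ k, writes k x → k ≠ j → ¬ (ord j < ord k ∧ ord k < ord i) := by
  rintro i x j hrf k hwk hkj ⟨hjk, hki⟩
  have hk_ne_i : k ≠ i := by rintro rfl; exact hki.false
  rcases edge_to_or_from_other_writer hrf_writes hvo_total hpost_edge hpre_edge
      hrf hwk hkj hk_ne_i with hGik | hGkj
  · exact (hord_topo i k hGik).not_gt hki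
  · exact (hord_topo k j hGkj).not_gt hjk

/-- Suppose for each data item `x` the versions of `x` (identified with
their writers) are linearly ordered by a version order `≪_x`, and the serialization
graph contains, for each reads-from pair (`T_j` writes `x_j`, `T_i` reads `x_j`) and
each other writer `T_k` of `x`, the edge `T_i → T_k` when `x_j ≪_x x_k` and the edge
`T_k → T_j` when `x_k ≪_x x_j`, plus the reads-from edge `T_j → T_i`. If the graph is
acyclic with topological order given by an injective ranking `ord`, then for every
item `x` and reads-from pair, there is no writer `T_k` of `x` with
`ord j < ord k < ord i`. -/
theorem version_order_edges_forbid_intermediate_writer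
    {Txn Item : Type*} [Fintype Txn]
    (writes : Txn → Item → Prop)
    (rf : Txn → Item → Txn → Prop)
    (vo : Item → Txn → Txn → Prop)
    (G : Txn → Txn → Prop)
    (hrf_writes : ∀ i x j, rf i x j → writes j x)
    (hvo_total : ∀ x a b, writes a x → writes b x → a ≠ b → vo x a b ∨ vo x b a)
    (hvo_asymm : ∀ x a b, vo x a b → ¬ vo x b a)
    (hrf_edge : ∀ i x j, rf i x j → G j i)
    (hpost_edge : ∀ i x j k, rf i x j → writes k x → k ≠ j → k ≠ i → vo x j k → G i k)
    (hpre_edge : ∀ i x j k, rf i x j → writes k x → k ≠ j → k ≠ i → vo x k j → G k j)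
    (hacyclic : Acyclic G)
    (ord : Txn → ℕ)
    (hord_inj : Function.Injective ord)
    (hord_topo : ∀ u v, G u v → ord u < ord v) :
    ∀ i x j, rf i x j →
      ∀ k, writes k x → k ≠ j → ¬ (ord j < ord k ∧ ord k < ord i) :=
  version_order_edges_forbid_intermediate_writer_general writes rf vo G hrf_writes hvo_total
    hpost_edge hpre_edge ord hord_topo
end
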